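/- arXiv:1505.06390 — 7 statements merged into one kernel-verified Lean document; each statement's English description precedes it below -/
import Mathlib

section
/- Let a < b be real numbers and let f : ℝ → ℝ be differentiable on [a,b] with f(a) < 0 and f'(t) ≤ -f(t)²/4 for all t ∈ [a,b]. Then b < a + 4/(-f(a)). (Hence a solution of the Raychaudhuri inequality with negative expansion at a point cannot be continued for proper time 4/|f(a)| to the future: the expansion must blow up to -∞ before then.) -/
/-!
Since `f' ≤ -f²/4 ≤ 0`, `f` stays negative on `[a, b]`, so `1/f` is defined there and
`(1/f)' = -f'/f² ≥ 1/4`. Integrating, `(b - a)/4 ≤ 1/f(b) - 1/f(a) < -1/f(a)`.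
-/

open Set

section
variable {f f' : ℝ → ℝ} {a b : ℝ}

theorem mul_sub_le_sub_of_hasDerivAt_Icc {C : ℝ}
    (hf : ∀ t ∈ Icc a b, HasDerivAt f (f' t) t) (hC : ∀ t ∈ Icc a b, C ≤ f' t)
    {x y : ℝ} (hx : x ∈ Icc a b) (hy : y ∈ Icc a b) (hxy : x ≤ y) :
    C * (y - x) ≤ f y - f x := by
  have hinterior : interior (Icc a b) ⊆ Icc a b := interior_subset
  refine (convex_Icc a b).mul_sub_le_image_sub_of_le_deriv
    (fun t ht => (hf t ht).continuousAt.continuousWithinAt)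
    (fun t ht => (hf t (hinterior ht)).differentiableAt.differentiableWithinAt)
    (fun t ht => ?_) x hx y hy hxy
  rw [(hf t (hinterior ht)).deriv]
  exact hC t (hinterior ht)

theorem neg_on_Icc_of_hasDerivAt_nonpos (hf : ∀ t ∈ Icc a b, HasDerivAt f (f' t) t)
    (hf' : ∀ t ∈ Icc a b, f' t ≤ 0) (ha : f a < 0) : ∀ t ∈ Icc a b, f t < 0 := by
  intro t ht
  have h := mul_sub_le_sub_of_hasDerivAt_Icc (f := fun t => -f t) (C := 0)
    (fun s hs => (hf s hs).neg) (fun s hs => neg_nonneg.2 (hf' s hs))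
    (left_mem_Icc.2 (ht.1.trans ht.2)) ht ht.1
  linarith

theorem mul_sub_le_inv_sub_inv_of_deriv_le_neg_mul_sq {c : ℝ} (hab : a ≤ b)
    (hf : ∀ t ∈ Icc a b, HasDerivAt f (f' t) t) (hf₀ : ∀ t ∈ Icc a b, f t ≠ 0)
    (hf' : ∀ t ∈ Icc a b, f' t ≤ -c * f t ^ 2) :
    c * (b - a) ≤ (f b)⁻¹ - (f a)⁻¹ := by
  refine mul_sub_le_sub_of_hasDerivAt_Icc (f := fun t => (f t)⁻¹)
    (fun t ht => (hf t ht).inv (hf₀ t ht)) (fun t ht => ?_)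
    (left_mem_Icc.2 hab) (right_mem_Icc.2 hab) hab
  have hsq : 0 < f t ^ 2 := sq_pos_of_ne_zero (hf₀ t ht)
  rw [neg_div, le_neg, div_le_iff₀ hsq]
  exact hf' t ht

end

/-- Raychaudhuri comparison: a solution of `f' ≤ -f²/4` with `f a < 0` must blow up
to `-∞` before proper time `4/(-f a)` to the future of `a`. -/
theorem raychaudhuri_blowup_future
    (a b : ℝ) (hab : a < b) (f f' : ℝ → ℝ)
    (hderiv : ∀ t ∈ Set.Icc a b, HasDerivAt f (f' t) t)
    (hfa : f a < 0)
    (hineq : ∀ t ∈ Set.Icc a b, f' t ≤ -(f t) ^ 2 / 4) :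
    b < a + 4 / (-f a) := by
  have hneg : ∀ t ∈ Icc a b, f t < 0 :=
    neg_on_Icc_of_hasDerivAt_nonpos hderiv
      (fun t ht => (hineq t ht).trans (by nlinarith [sq_nonneg (f t)])) hfa
  have hgrowth : 1 / 4 * (b - a) ≤ (f b)⁻¹ - (f a)⁻¹ :=
    mul_sub_le_inv_sub_inv_of_deriv_le_neg_mul_sq hab.le hderiv (fun t ht => (hneg t ht).ne)
      (fun t ht => (hineq t ht).trans_eq (by ring))
  have hfb : (f b)⁻¹ < 0 := inv_lt_zero.2 (hneg b (right_mem_Icc.2 hab.le))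
  have hdiv : 4 / (-f a) = -4 * (f a)⁻¹ := by rw [div_neg, div_eq_mul_inv]; ring
  linarith
end

section
/- Let b < a be real numbers and let f : ℝ → ℝ be differentiable on [b,a] with f(a) > 0 and f'(t) ≤ -f(t)²/4 for all t ∈ [b,a]. Then b > a - 4/f(a). (Hence a solution of the Raychaudhuri inequality with positive expansion at a point cannot be continued for proper time 4/f(a) to the past: the expansion must blow up to +∞ before then.) -/
/-!
`f' ≤ -k f²` with `k ≥ 0` makes `f` nonincreasing, so `f` stays positive to
the past of `a`, and there `(1/f)' = -f'/f² ≥ k`: the function `1/f - k t` is nondecreasing. With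
`k = 1/4` this gives `a - 4/f(a) ≤ b - 4/f(b) < b`.
-/

open Set

section DerivComparison

variable {f f' : ℝ → ℝ} {s : Set ℝ}

lemma monotoneOn_of_forall_hasDerivAt_nonneg (hs : Convex ℝ s)
    (hf : ∀ t ∈ s, HasDerivAt f (f' t) t) (hf' : ∀ t ∈ s, 0 ≤ f' t) : MonotoneOn f s :=
  monotoneOn_of_hasDerivWithinAt_nonneg hs (fun t ht ↦ (hf t ht).continuousAt.continuousWithinAt)
    (fun t ht ↦ (hf t (interior_subset ht)).hasDerivWithinAt) fun t ht ↦ hf' t (interior_subset ht)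

lemma antitoneOn_of_forall_hasDerivAt_nonpos (hs : Convex ℝ s)
    (hf : ∀ t ∈ s, HasDerivAt f (f' t) t) (hf' : ∀ t ∈ s, f' t ≤ 0) : AntitoneOn f s :=
  antitoneOn_of_hasDerivWithinAt_nonpos hs (fun t ht ↦ (hf t ht).continuousAt.continuousWithinAt)
    (fun t ht ↦ (hf t (interior_subset ht)).hasDerivWithinAt) fun t ht ↦ hf' t (interior_subset ht)

variable {k : ℝ}

lemma antitoneOn_of_deriv_le_neg_mul_sq (hs : Convex ℝ s) (hf : ∀ t ∈ s, HasDerivAt f (f' t) t)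
    (hk : 0 ≤ k) (hineq : ∀ t ∈ s, f' t ≤ -k * f t ^ 2) : AntitoneOn f s :=
  antitoneOn_of_forall_hasDerivAt_nonpos hs hf fun t ht ↦
    (hineq t ht).trans (by nlinarith [sq_nonneg (f t)])

lemma monotoneOn_inv_sub_mul_of_deriv_le_neg_mul_sq (hs : Convex ℝ s)
    (hf : ∀ t ∈ s, HasDerivAt f (f' t) t) (hpos : ∀ t ∈ s, 0 < f t)
    (hineq : ∀ t ∈ s, f' t ≤ -k * f t ^ 2) : MonotoneOn (fun t ↦ (f t)⁻¹ - k * t) s := by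
  refine monotoneOn_of_forall_hasDerivAt_nonneg hs
    (fun t ht ↦ ((hf t ht).inv (hpos t ht).ne').sub ((hasDerivAt_id t).const_mul k)) fun t ht ↦ ?_
  have hsq : 0 < f t ^ 2 := pow_pos (hpos t ht) 2
  have hk : k ≤ -f' t / f t ^ 2 := by
    rw [le_div_iff₀ hsq]
    linarith [hineq t ht]
  simp only [mul_one]
  linarith

end DerivComparison

/-- Raychaudhuri comparison: a solution of `f' ≤ -f²/4` with `f a > 0` must blow up
to `+∞` before proper time `4/(f a)` to the past of `a`. -/
theorem raychaudhuri_blowup_past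
    (a b : ℝ) (hab : b < a) (f f' : ℝ → ℝ)
    (hderiv : ∀ t ∈ Set.Icc b a, HasDerivAt f (f' t) t)
    (hfa : 0 < f a)
    (hineq : ∀ t ∈ Set.Icc b a, f' t ≤ -(f t) ^ 2 / 4) :
    b > a - 4 / f a := by
  have hb : b ∈ Icc b a := left_mem_Icc.mpr hab.le
  have ha : a ∈ Icc b a := right_mem_Icc.mpr hab.le
  have hineq' : ∀ t ∈ Icc b a, f' t ≤ -(1 / 4) * f t ^ 2 := fun t ht ↦ by linarith [hineq t ht]
  have hpos : ∀ t ∈ Icc b a, 0 < f t := fun t ht ↦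
    hfa.trans_le (antitoneOn_of_deriv_le_neg_mul_sq (convex_Icc b a) hderiv (by norm_num) hineq'
      ht ha ht.2)
  have hinv := monotoneOn_inv_sub_mul_of_deriv_le_neg_mul_sq (convex_Icc b a) hderiv hpos hineq'
    hb ha hab.le
  have hfb : 0 < (f b)⁻¹ := inv_pos.mpr (hpos b hb)
  rw [gt_iff_lt, sub_lt_iff_lt_add, div_eq_mul_inv]
  linarith
end

section
/- Let P be a smooth solution of the polarized Gowdy wave equation, and for an integer k ≥ 1 define the energy E_k(τ) = Σ_{j=0}^{k-1} ∫₀^{2π} [ ½(∂θ^j ∂τP(τ,θ))² + ½ e^{-2τ}(∂θ^{j+1}P(τ,θ))² ] dθ. Then E_k is differentiable with E_k'(τ) = -e^{-2τ} Σ_{j=0}^{k-1} ∫₀^{2π} (∂θ^{j+1}P(τ,θ))² dθ; in particular each E_k is monotonically non-increasing in τ. -/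
open Real

noncomputable def pd1 (f : ℝ × ℝ → ℝ) : ℝ × ℝ → ℝ := fun p => fderiv ℝ f p (1, 0)
noncomputable def pd2 (f : ℝ × ℝ → ℝ) : ℝ × ℝ → ℝ := fun p => fderiv ℝ f p (0, 1)

lemma smooth_pd1 {f : ℝ × ℝ → ℝ} (hf : ContDiff ℝ (⊤ : ℕ∞) f) : ContDiff ℝ (⊤ : ℕ∞) (pd1 f) :=
  (hf.fderiv_right (by simp)).clm_apply contDiff_const

lemma smooth_pd2 {f : ℝ × ℝ → ℝ} (hf : ContDiff ℝ (⊤ : ℕ∞) f) : ContDiff ℝ (⊤ : ℕ∞) (pd2 f) :=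
  (hf.fderiv_right (by simp)).clm_apply contDiff_const

lemma hasDerivAt_slice1 {f : ℝ × ℝ → ℝ} (hf : DifferentiableAt ℝ f p) :
    HasDerivAt (fun t => f (t, p.2)) (pd1 f p) p.1 := by
  have h1 : HasFDerivAt (fun t : ℝ => (t, p.2)) ((ContinuousLinearMap.id ℝ ℝ).prod 0) p.1 :=
    (hasFDerivAt_id p.1).prodMk (hasFDerivAt_const p.2 p.1)
  have := (hf.hasFDerivAt.comp p.1 h1).hasDerivAt
  simpa [pd1, Function.comp_def] using this

lemma hasDerivAt_slice2 {f : ℝ × ℝ → ℝ} (hf : DifferentiableAt ℝ f p) :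
    HasDerivAt (fun θ => f (p.1, θ)) (pd2 f p) p.2 := by
  have h1 : HasFDerivAt (fun θ : ℝ => (p.1, θ)) ((0 : ℝ →L[ℝ] ℝ).prod (ContinuousLinearMap.id ℝ ℝ)) p.2 :=
    (hasFDerivAt_const p.1 p.2).prodMk (hasFDerivAt_id p.2)
  have := (hf.hasFDerivAt.comp p.2 h1).hasDerivAt
  simpa [pd2, Function.comp_def] using this

lemma smooth_pd2_iter {f : ℝ × ℝ → ℝ} (hf : ContDiff ℝ (⊤ : ℕ∞) f) (j : ℕ) :
    ContDiff ℝ (⊤ : ℕ∞) (pd2^[j] f) := by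
  induction j with
  | zero => exact hf
  | succ n ih => rw [Function.iterate_succ']; exact smooth_pd2 ih

lemma iteratedDeriv_slice {f : ℝ × ℝ → ℝ} (hf : ContDiff ℝ (⊤ : ℕ∞) f) (j : ℕ) (τ θ : ℝ) :
    iteratedDeriv j (fun θ' => f (τ, θ')) θ = pd2^[j] f (τ, θ) := by
  induction j generalizing θ with
  | zero => simp
  | succ n ih =>
    rw [iteratedDeriv_succ, Function.iterate_succ']
    have : deriv (iteratedDeriv n fun θ' => f (τ, θ')) θ
        = deriv (fun θ' => pd2^[n] f (τ, θ')) θ := by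
      congr 1; funext x; exact ih x
    rw [this]
    exact (hasDerivAt_slice2 ((smooth_pd2_iter hf n).differentiable (by simp) (τ, θ))).deriv

lemma deriv_slice1 {f : ℝ × ℝ → ℝ} (hf : ContDiff ℝ (⊤ : ℕ∞) f) (τ θ : ℝ) :
    deriv (fun s => f (s, θ)) τ = pd1 f (τ, θ) :=
  (hasDerivAt_slice1 (hf.differentiable (by simp) (τ, θ))).deriv

lemma pd_comm {f : ℝ × ℝ → ℝ} (hf : ContDiff ℝ (⊤ : ℕ∞) f) :
    pd1 (pd2 f) = pd2 (pd1 f) := by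
  funext p
  have hdf : ∀ q, HasFDerivAt f (fderiv ℝ f q) q := fun q =>
    (hf.differentiable (by simp) q).hasFDerivAt
  have hdf2 : DifferentiableAt ℝ (fderiv ℝ f) p :=
    ((hf.fderiv_right (m := 1) (by norm_cast)).differentiable (by simp) p)
  have hsymm := second_derivative_symmetric hdf hdf2.hasFDerivAt ((1:ℝ),(0:ℝ)) ((0:ℝ),(1:ℝ))
  have h1 : pd1 (pd2 f) p = (fderiv ℝ (fderiv ℝ f) p (1,0)) (0,1) := by
    unfold pd1 pd2
    rw [fderiv_clm_apply hdf2 (differentiableAt_const _)]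
    simp
  have h2 : pd2 (pd1 f) p = (fderiv ℝ (fderiv ℝ f) p (0,1)) (1,0) := by
    unfold pd1 pd2
    rw [fderiv_clm_apply hdf2 (differentiableAt_const _)]
    simp
  rw [h1, h2, hsymm]

def Per (g : ℝ × ℝ → ℝ) : Prop := ∀ p : ℝ × ℝ, g (p.1, p.2 + 2 * π) = g p

lemma per_fderiv {g : ℝ × ℝ → ℝ} (hg : Differentiable ℝ g) (hp : Per g) (p : ℝ × ℝ) :
    fderiv ℝ g (p.1, p.2 + 2 * π) = fderiv ℝ g p := by
  have hT : HasFDerivAt (fun q : ℝ × ℝ => q + ((0 : ℝ), 2 * π))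
      (ContinuousLinearMap.id ℝ (ℝ × ℝ)) p := (hasFDerivAt_id p).add_const _
  have hc : HasFDerivAt (fun q : ℝ × ℝ => g (q + ((0 : ℝ), 2 * π)))
      (fderiv ℝ g (p + ((0:ℝ), 2 * π))) p := by
    simpa [Function.comp_def] using ((hg (p + ((0:ℝ), 2*π))).hasFDerivAt.comp p hT)
  have heq : (fun q : ℝ × ℝ => g (q + ((0 : ℝ), 2 * π))) = g := by
    funext q
    have h2 : q + ((0:ℝ), 2 * π) = (q.1, q.2 + 2 * π) := by simp [Prod.ext_iff]
    rw [h2]; exact hp q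
  rw [heq] at hc
  have h3 : (p.1, p.2 + 2 * π) = p + ((0:ℝ), 2 * π) := by simp [Prod.ext_iff]
  rw [h3, ← hc.fderiv]

lemma per_pd1 {g : ℝ × ℝ → ℝ} (hg : Differentiable ℝ g) (hp : Per g) : Per (pd1 g) := by
  intro p; unfold pd1; rw [per_fderiv hg hp]

lemma per_pd2 {g : ℝ × ℝ → ℝ} (hg : Differentiable ℝ g) (hp : Per g) : Per (pd2 g) := by
  intro p; unfold pd2; rw [per_fderiv hg hp]

lemma per_pd2_iter {g : ℝ × ℝ → ℝ} (hg : ContDiff ℝ (⊤ : ℕ∞) g) (hp : Per g) (j : ℕ) :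
    Per (pd2^[j] g) := by
  induction j with
  | zero => exact hp
  | succ n ih =>
    rw [Function.iterate_succ']
    exact per_pd2 ((smooth_pd2_iter hg n).differentiable (by simp)) ih

lemma pd2_const_mul {c : ℝ → ℝ} {g : ℝ × ℝ → ℝ} (hc : ContDiff ℝ (⊤ : ℕ∞) c)
    (hg : ContDiff ℝ (⊤ : ℕ∞) g) :
    pd2 (fun p => c p.1 * g p) = fun p => c p.1 * pd2 g p := by
  funext p
  have h1 : HasFDerivAt (fun q : ℝ × ℝ => c q.1)
      ((ContinuousLinearMap.smulRight (1 : ℝ →L[ℝ] ℝ) (deriv c p.1)).comp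
        (ContinuousLinearMap.fst ℝ ℝ ℝ)) p :=
    ((hc.differentiable (by simp) p.1).hasDerivAt.hasFDerivAt).comp p (hasFDerivAt_fst)
  have h2 := (hg.differentiable (by simp) p).hasFDerivAt
  have := (h1.mul h2).fderiv
  unfold pd2
  rw [show (fun p => c p.1 * g p) = (fun q => c q.1) * g from rfl, this]
  simp

lemma pd2_iter_const_mul {c : ℝ → ℝ} {g : ℝ × ℝ → ℝ} (hc : ContDiff ℝ (⊤ : ℕ∞) c)
    (hg : ContDiff ℝ (⊤ : ℕ∞) g) (j : ℕ) :
    pd2^[j] (fun p => c p.1 * g p) = fun p => c p.1 * pd2^[j] g p := by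
  induction j with
  | zero => rfl
  | succ n ih =>
    rw [Function.iterate_succ']
    show pd2 (pd2^[n] fun p => c p.1 * g p) = _
    rw [ih, pd2_const_mul hc (smooth_pd2_iter hg n)]
    rfl

lemma continuous_slice2 {f : ℝ × ℝ → ℝ} (hf : ContDiff ℝ (⊤ : ℕ∞) f) (τ : ℝ) :
    Continuous (fun θ => f (τ, θ)) :=
  (hf.continuous).comp (continuous_const.prodMk continuous_id)

lemma integral_pd2 {h : ℝ × ℝ → ℝ} (hh : ContDiff ℝ (⊤ : ℕ∞) h) (τ a b : ℝ) :
    ∫ θ in a..b, pd2 h (τ, θ) = h (τ, b) - h (τ, a) := by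
  apply intervalIntegral.integral_eq_sub_of_hasDerivAt
  · intro x _
    exact hasDerivAt_slice2 ((hh.differentiable (by simp)) (τ, x))
  · exact (continuous_slice2 (smooth_pd2 hh) τ).intervalIntegrable a b

lemma hasDerivAt_integral_param {f : ℝ × ℝ → ℝ} (hf : ContDiff ℝ (⊤ : ℕ∞) f) (a b τ : ℝ) :
    HasDerivAt (fun t => ∫ θ in a..b, f (t, θ)) (∫ θ in a..b, pd1 f (τ, θ)) τ := by
  have hcont1 : Continuous (pd1 f) := (smooth_pd1 hf).continuous
  set K : Set (ℝ × ℝ) := (Metric.closedBall τ 1) ×ˢ (Set.uIcc a b) with hK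
  have hKc : IsCompact K := (isCompact_closedBall τ 1).prod isCompact_uIcc
  obtain ⟨C, hC⟩ := hKc.exists_bound_of_continuousOn hcont1.continuousOn
  have key := intervalIntegral.hasDerivAt_integral_of_dominated_loc_of_deriv_le
    (F := fun t θ => f (t, θ)) (F' := fun t θ => pd1 f (t, θ)) (bound := fun _ => C)
    (a := a) (b := b) (x₀ := τ) (s := Metric.ball τ 1) (μ := MeasureTheory.volume) (Metric.ball_mem_nhds τ one_pos)
    (Filter.Eventually.of_forall fun t =>
      ((continuous_slice2 hf t).aestronglyMeasurable))
    ((continuous_slice2 hf τ).intervalIntegrable a b)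
    ((hcont1.comp (continuous_const.prodMk continuous_id)).aestronglyMeasurable)
    ?_ ?_ ?_
  · exact key.2
  · refine MeasureTheory.ae_of_all _ fun θ hθ x hx => ?_
    exact hC (x, θ) ⟨Metric.ball_subset_closedBall hx, Set.uIoc_subset_uIcc hθ⟩
  · exact intervalIntegrable_const
  · refine MeasureTheory.ae_of_all _ fun θ _ x _ => ?_
    exact hasDerivAt_slice1 ((hf.differentiable (by simp)) (x, θ))

lemma deriv_slice2 {f : ℝ × ℝ → ℝ} (hf : ContDiff ℝ (⊤ : ℕ∞) f) (τ θ : ℝ) :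
    deriv (fun θ' => f (τ, θ')) θ = pd2 f (τ, θ) :=
  (hasDerivAt_slice2 (hf.differentiable (by simp) (τ, θ))).deriv

lemma pd_comm_iter {g : ℝ × ℝ → ℝ} (hg : ContDiff ℝ (⊤ : ℕ∞) g) (j : ℕ) :
    pd1 (pd2^[j] g) = pd2^[j] (pd1 g) := by
  induction j generalizing g with
  | zero => rfl
  | succ n ih =>
    rw [Function.iterate_succ_apply, ih (smooth_pd2 hg), pd_comm hg,
      ← Function.iterate_succ_apply]

lemma pd2_mul {u v : ℝ × ℝ → ℝ} (hu : ContDiff ℝ (⊤ : ℕ∞) u) (hv : ContDiff ℝ (⊤ : ℕ∞) v) (p : ℝ × ℝ) :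
    pd2 (fun q => u q * v q) p = pd2 u p * v p + u p * pd2 v p := by
  have h := ((hu.differentiable (by simp) p).hasFDerivAt.mul
    (hv.differentiable (by simp) p).hasFDerivAt).fderiv
  unfold pd2
  rw [show (fun q => u q * v q) = u * v from rfl, h]
  simp
  ring

/-- Monotone decay of the polarized Gowdy energies
`E_k(τ) = Σ_{j=0}^{k-1} ∫₀^{2π} [½(∂θ^j ∂τP)² + ½ e^{-2τ}(∂θ^{j+1}P)²] dθ`. -/
theorem polarized_gowdy_energy_decay
    (P : ℝ → ℝ → ℝ)
    (hsmooth : ContDiff ℝ (⊤ : ℕ∞) (fun p : ℝ × ℝ => P p.1 p.2))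
    (hper : ∀ τ θ : ℝ, P τ (θ + 2 * π) = P τ θ)
    (hwave : ∀ τ θ : ℝ, deriv (fun s => deriv (fun s' => P s' θ) s) τ
      = Real.exp (-2 * τ) * deriv (deriv (P τ)) θ)
    (k : ℕ) (hk : 1 ≤ k)
    (E : ℝ → ℝ)
    (hE : ∀ τ : ℝ, E τ = ∑ j ∈ Finset.range k,
      ∫ θ in (0:ℝ)..(2 * π),
        ((1/2) * (iteratedDeriv j (fun θ' => deriv (fun s => P s θ') τ) θ) ^ 2
          + (1/2) * Real.exp (-2 * τ) * (iteratedDeriv (j + 1) (P τ) θ) ^ 2)) :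
    (∀ τ : ℝ, HasDerivAt E
      (-Real.exp (-2 * τ) * ∑ j ∈ Finset.range k,
        ∫ θ in (0:ℝ)..(2 * π), (iteratedDeriv (j + 1) (P τ) θ) ^ 2) τ)
    ∧ Antitone E := by
  set F : ℝ × ℝ → ℝ := fun p : ℝ × ℝ => P p.1 p.2 with hF
  -- basic smoothness
  have hG : ContDiff ℝ (⊤ : ℕ∞) (pd1 F) := smooth_pd1 hsmooth
  have hQs : ∀ j, ContDiff ℝ (⊤ : ℕ∞) (pd2^[j] (pd1 F)) := fun j => smooth_pd2_iter hG j
  have hRs : ∀ j, ContDiff ℝ (⊤ : ℕ∞) (pd2^[j+1] F) := fun j => smooth_pd2_iter hsmooth (j+1)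
  have hexpc : ContDiff ℝ (⊤ : ℕ∞) (fun p : ℝ × ℝ => Real.exp (-2 * p.1)) :=
    Real.contDiff_exp.comp (contDiff_const.mul contDiff_fst)
  -- identification of the integrand pieces
  have hQ : ∀ (j : ℕ) (τ θ : ℝ),
      iteratedDeriv j (fun θ' => deriv (fun s => P s θ') τ) θ = pd2^[j] (pd1 F) (τ, θ) := by
    intro j τ θ
    have h1 : (fun θ' => deriv (fun s => P s θ') τ) = fun θ' => pd1 F (τ, θ') :=
      funext fun θ' => deriv_slice1 hsmooth τ θ'
    rw [h1, iteratedDeriv_slice hG]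
  have hR : ∀ (j : ℕ) (τ θ : ℝ),
      iteratedDeriv (j+1) (P τ) θ = pd2^[j+1] F (τ, θ) := fun j τ θ =>
    iteratedDeriv_slice hsmooth (j+1) τ θ
  -- wave equation in joint form
  have hw2 : pd1 (pd1 F) = fun p : ℝ × ℝ => Real.exp (-2 * p.1) * pd2 (pd2 F) p := by
    funext p
    have h1 : (fun s => deriv (fun s' => P s' p.2) s) = fun s => pd1 F (s, p.2) :=
      funext fun s => deriv_slice1 hsmooth s p.2
    have h2 : deriv (P p.1) = fun θ' => pd2 F (p.1, θ') :=
      funext fun θ' => deriv_slice2 hsmooth p.1 θ'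
    have h3 := hwave p.1 p.2
    rw [h1, h2] at h3
    rw [deriv_slice1 hG p.1 p.2] at h3
    rw [deriv_slice2 (smooth_pd2 hsmooth) p.1 p.2] at h3
    exact h3
  -- tau-derivatives of Q and R
  have hQder : ∀ j, pd1 (pd2^[j] (pd1 F))
      = fun p : ℝ × ℝ => Real.exp (-2 * p.1) * pd2 (pd2^[j+1] F) p := by
    intro j
    have hc : ContDiff ℝ (⊤ : ℕ∞) (fun t : ℝ => Real.exp (-2 * t)) :=
      Real.contDiff_exp.comp (contDiff_const.mul contDiff_id)
    rw [pd_comm_iter hG j, hw2,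
      pd2_iter_const_mul (c := fun t : ℝ => Real.exp (-2 * t))
        (g := pd2 (pd2 F)) hc (smooth_pd2 (smooth_pd2 hsmooth)) j]
    funext p
    congr 1
    rw [← Function.iterate_succ_apply pd2 j (pd2 F),
      Function.iterate_succ_apply' pd2 j (pd2 F),
      ← Function.iterate_succ_apply pd2 j F]
  have hRder : ∀ j, pd1 (pd2^[j+1] F) = pd2 (pd2^[j] (pd1 F)) := by
    intro j
    rw [Function.iterate_succ_apply, pd_comm_iter (smooth_pd2 hsmooth) j,
      pd_comm hsmooth, ← Function.iterate_succ_apply, Function.iterate_succ_apply']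
  -- periodicity
  have hPerF : Per F := fun p => hper p.1 p.2
  have hPerQ : ∀ j, Per (pd2^[j] (pd1 F)) := fun j =>
    per_pd2_iter hG (per_pd1 (hsmooth.differentiable (by simp)) hPerF) j
  have hPerR : ∀ j, Per (pd2^[j+1] F) := fun j =>
    per_pd2_iter hsmooth hPerF (j+1)
  -- the per-mode energy density
  set gj : ℕ → ℝ × ℝ → ℝ := fun j p =>
    1/2 * (pd2^[j] (pd1 F) p) ^ 2 + 1/2 * (Real.exp (-2 * p.1) * (pd2^[j+1] F p) ^ 2)
    with hgj
  have hgjs : ∀ j, ContDiff ℝ (⊤ : ℕ∞) (gj j) := by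
    intro j
    exact (contDiff_const.mul ((hQs j).pow 2)).add
      (contDiff_const.mul (hexpc.mul ((hRs j).pow 2)))
  -- E as sum of parametric integrals of gj
  have hE' : E = fun τ => ∑ j ∈ Finset.range k, ∫ θ in (0:ℝ)..(2*π), gj j (τ, θ) := by
    funext τ
    rw [hE τ]
    refine Finset.sum_congr rfl fun j _ => ?_
    congr 1
    funext θ
    rw [hQ j τ θ, hR j τ θ, hgj]
    ring
  -- pd1 of gj
  have hder : ∀ j, pd1 (gj j) = fun p : ℝ × ℝ => Real.exp (-2 * p.1) *
      (pd2 (fun q => pd2^[j] (pd1 F) q * pd2^[j+1] F q) p - (pd2^[j+1] F p) ^ 2) := by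
    intro j
    funext p
    obtain ⟨τ, θ⟩ := p
    have hq : HasDerivAt (fun t => pd2^[j] (pd1 F) (t, θ))
        (pd1 (pd2^[j] (pd1 F)) (τ, θ)) τ :=
      hasDerivAt_slice1 ((hQs j).differentiable (by simp) (τ, θ))
    have hr : HasDerivAt (fun t => pd2^[j+1] F (t, θ))
        (pd1 (pd2^[j+1] F) (τ, θ)) τ :=
      hasDerivAt_slice1 ((hRs j).differentiable (by simp) (τ, θ))
    have hexp : HasDerivAt (fun t : ℝ => Real.exp (-2 * t))
        (Real.exp (-2 * τ) * (-2 * 1)) τ := ((hasDerivAt_id τ).const_mul (-2)).exp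
    have htot := ((hq.pow 2).const_mul (1/2 : ℝ)).add
      ((hexp.mul (hr.pow 2)).const_mul (1/2 : ℝ))
    have hslice : HasDerivAt (fun t => gj j (t, θ)) (pd1 (gj j) (τ, θ)) τ :=
      hasDerivAt_slice1 ((hgjs j).differentiable (by simp) (τ, θ))
    have huniq := hslice.unique htot
    rw [huniq, hQder j, hRder j, pd2_mul (hQs j) (hRs j), Pi.pow_apply]
    ring
  -- value of the integral of pd1 (gj j)
  have hval : ∀ (j : ℕ) (τ : ℝ), (∫ θ in (0:ℝ)..(2*π), pd1 (gj j) (τ, θ))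
      = -Real.exp (-2 * τ) * ∫ θ in (0:ℝ)..(2*π), (pd2^[j+1] F (τ, θ)) ^ 2 := by
    intro j τ
    simp only [hder j]
    have hH : ContDiff ℝ (⊤ : ℕ∞) (fun q => pd2^[j] (pd1 F) q * pd2^[j+1] F q) :=
      (hQs j).mul (hRs j)
    have hint1 : IntervalIntegrable
        (fun θ => pd2 (fun q => pd2^[j] (pd1 F) q * pd2^[j+1] F q) (τ, θ))
        MeasureTheory.volume 0 (2*π) :=
      (continuous_slice2 (smooth_pd2 hH) τ).intervalIntegrable _ _
    have hint2 : IntervalIntegrable (fun θ => (pd2^[j+1] F (τ, θ)) ^ 2)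
        MeasureTheory.volume 0 (2*π) :=
      (((continuous_slice2 (hRs j) τ)).pow 2).intervalIntegrable _ _
    rw [intervalIntegral.integral_const_mul, intervalIntegral.integral_sub hint1 hint2,
      integral_pd2 hH τ 0 (2*π)]
    have h1 := hPerQ j (τ, 0)
    have h2 := hPerR j (τ, 0)
    simp only [zero_add] at h1 h2
    rw [h1, h2]
    ring
  -- the derivative statement
  have hmain : ∀ τ : ℝ, HasDerivAt E
      (-Real.exp (-2 * τ) * ∑ j ∈ Finset.range k,
        ∫ θ in (0:ℝ)..(2 * π), (iteratedDeriv (j + 1) (P τ) θ) ^ 2) τ := by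
    intro τ
    rw [hE']
    have hterm : ∀ j ∈ Finset.range k, HasDerivAt (fun t => ∫ θ in (0:ℝ)..(2*π), gj j (t, θ))
        (∫ θ in (0:ℝ)..(2*π), pd1 (gj j) (τ, θ)) τ := fun j _ =>
      hasDerivAt_integral_param (hgjs j) 0 (2*π) τ
    have hsum := HasDerivAt.sum hterm
    have hveq : (∑ j ∈ Finset.range k, ∫ θ in (0:ℝ)..(2*π), pd1 (gj j) (τ, θ))
        = -Real.exp (-2 * τ) * ∑ j ∈ Finset.range k,
          ∫ θ in (0:ℝ)..(2 * π), (iteratedDeriv (j + 1) (P τ) θ) ^ 2 := by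
      rw [Finset.mul_sum]
      refine Finset.sum_congr rfl fun j _ => ?_
      rw [hval j τ]
      congr 1
      congr 1
      funext θ
      rw [hR j τ θ]
    rw [← hveq]
    simpa only [Finset.sum_fn] using hsum
  refine ⟨hmain, ?_⟩
  have hdiff : Differentiable ℝ E := fun τ => (hmain τ).differentiableAt
  refine antitone_of_deriv_nonpos hdiff fun τ => ?_
  rw [(hmain τ).deriv]
  have hnn : 0 ≤ ∑ j ∈ Finset.range k,
      ∫ θ in (0:ℝ)..(2 * π), (iteratedDeriv (j + 1) (P τ) θ) ^ 2 := by
    refine Finset.sum_nonneg fun j _ => ?_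
    refine intervalIntegral.integral_nonneg (by positivity) fun θ _ => ?_
    positivity
  have := Real.exp_pos (-2 * τ)
  nlinarith
end

section
/- Let v : ℝ → ℝ be a smooth 2π-periodic function and let ε > 0. Then there exists a constant c with |c| < ε such that for every θ it is NOT the case that ( (v(θ)+c)² = 1 and v'(θ) = 0 and v''(θ) = 0 ). (Hence the asymptotic data sets whose polarized Gowdy developments have curvature blowup at every point of the singularity are dense: the degenerate condition v² = 1, v' = 0, v'' = 0, which is necessary for curvature boundedness along an observer approaching θ, can be removed everywhere by an arbitrarily small constant perturbation of v.) -/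
open Real MeasureTheory Set

/-- Sard-type lemma: the set of critical values of a differentiable real function is null. -/
lemma gowdy_crit_null (v : ℝ → ℝ) (hv : Differentiable ℝ v) :
    volume (v '' {θ : ℝ | deriv v θ = 0}) = 0 := by
  apply addHaar_image_eq_zero_of_det_fderivWithin_eq_zero (volume : Measure ℝ)
    (f' := fun _ => (0 : ℝ →L[ℝ] ℝ))
  · intro x hx
    have h : HasDerivAt v 0 x := by
      have := (hv x).hasDerivAt
      rwa [hx] at this
    exact h.hasFDerivAt.hasFDerivWithinAt.congr_fderiv (by ext y; simp)
  · intro x _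
    simp [ContinuousLinearMap.det]

/-- Density of nondegenerate asymptotic data: the degenerate condition
`v² = 1, v' = 0, v'' = 0` can be removed everywhere on the circle by an arbitrarily
small constant perturbation of the asymptotic velocity `v`. -/
theorem polarized_gowdy_asymptotic_data_density
    (v : ℝ → ℝ) (hv : ContDiff ℝ (⊤ : ℕ∞) v)
    (hper : ∀ θ : ℝ, v (θ + 2 * π) = v θ)
    (ε : ℝ) (hε : 0 < ε) :
    ∃ c : ℝ, |c| < ε ∧
      ∀ θ : ℝ, ¬((v θ + c) ^ 2 = 1 ∧ deriv v θ = 0 ∧ deriv (deriv v) θ = 0) := by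
  set S : Set ℝ := v '' {θ : ℝ | deriv v θ = 0} with hS
  have hSnull : volume S = 0 := gowdy_crit_null v (hv.differentiable (by simp))
  have hSnm : NullMeasurableSet S (volume : Measure ℝ) :=
    NullMeasurableSet.of_null hSnull
  -- the bad set of constants
  set T : Set ℝ := (fun c => 1 - c) ⁻¹' S ∪ (fun c => -1 - c) ⁻¹' S with hT
  have hmp : ∀ a : ℝ, MeasurePreserving (fun c : ℝ => a - c) volume volume := by
    intro a
    have h1 : (fun c : ℝ => a - c) = (fun c : ℝ => a + c) ∘ Neg.neg := by
      ext c; simp [sub_eq_add_neg]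
    rw [h1]
    exact (measurePreserving_add_left volume a).comp (Measure.measurePreserving_neg volume)
  have hTnull : volume T = 0 := by
    have h1 : volume ((fun c : ℝ => 1 - c) ⁻¹' S) = 0 := by
      rw [(hmp 1).measure_preimage hSnm]; exact hSnull
    have h2 : volume ((fun c : ℝ => -1 - c) ⁻¹' S) = 0 := by
      rw [(hmp (-1)).measure_preimage hSnm]; exact hSnull
    exact le_antisymm (le_trans (measure_union_le _ _) (by simp [h1, h2])) zero_le
  -- pick c in (-ε, ε) \ T
  have hne : (Ioo (-ε) ε \ T).Nonempty := by
    by_contra h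
    rw [not_nonempty_iff_eq_empty, diff_eq_empty] at h
    have : volume (Ioo (-ε) ε) ≤ volume T := measure_mono h
    rw [hTnull, Real.volume_Ioo] at this
    simp only [nonpos_iff_eq_zero, ENNReal.ofReal_eq_zero] at this
    linarith
  obtain ⟨c, hc1, hc2⟩ := hne
  refine ⟨c, ?_, ?_⟩
  · rw [abs_lt]; exact ⟨hc1.1, hc1.2⟩
  · rintro θ ⟨hsq, hd, -⟩
    have habs : |v θ + c| = 1 := by
      have h1 : |v θ + c| ^ 2 = 1 ^ 2 := by rw [sq_abs, hsq]; ring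
      have := abs_nonneg (v θ + c)
      nlinarith [sq_nonneg (|v θ + c| - 1), sq_nonneg (|v θ + c| + 1)]
    have hmem : v θ ∈ S := ⟨θ, hd, rfl⟩
    rcases abs_eq (by norm_num : (0:ℝ) ≤ 1) |>.mp habs with h | h
    · apply hc2; left
      show 1 - c ∈ S
      have : v θ = 1 - c := by linarith
      rwa [this] at hmem
    · apply hc2; right
      show -1 - c ∈ S
      have : v θ = -1 - c := by linarith
      rwa [this] at hmem
end

section
/- Let (P, Q) be a smooth solution of the T³ Gowdy system. Then the Gowdy energy E(τ) = ∫₀^{2π} ½[ (∂τP)² + e^{-2τ}(∂θP)² + e^{2P}( (∂τQ)² + e^{-2τ}(∂θQ)² ) ] dθ is differentiable with E'(τ) = -e^{-2τ} ∫₀^{2π} [ (∂θP)² + e^{2P}(∂θQ)² ] dθ; in particular E is monotonically non-increasing in τ. -/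
open Real

/-- First partial derivative (in the first variable). -/
noncomputable def gD1 (f : ℝ × ℝ → ℝ) : ℝ × ℝ → ℝ := fun p => fderiv ℝ f p (1, 0)

/-- First partial derivative (in the second variable). -/
noncomputable def gD2 (f : ℝ × ℝ → ℝ) : ℝ × ℝ → ℝ := fun p => fderiv ℝ f p (0, 1)

lemma gD1_contDiff {f : ℝ × ℝ → ℝ} (hf : ContDiff ℝ (⊤ : ℕ∞) f) : ContDiff ℝ (⊤ : ℕ∞) (gD1 f) :=
  (hf.fderiv_right (by simp)).clm_apply contDiff_const

lemma gD2_contDiff {f : ℝ × ℝ → ℝ} (hf : ContDiff ℝ (⊤ : ℕ∞) f) : ContDiff ℝ (⊤ : ℕ∞) (gD2 f) :=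
  (hf.fderiv_right (by simp)).clm_apply contDiff_const

lemma gSlice1 {f : ℝ × ℝ → ℝ} (hf : ContDiff ℝ (⊤ : ℕ∞) f) (τ θ : ℝ) :
    HasDerivAt (fun s => f (s, θ)) (gD1 f (τ, θ)) τ := by
  have h1 : HasDerivAt (fun s : ℝ => (s, θ)) ((1:ℝ), (0:ℝ)) τ :=
    (hasDerivAt_id τ).prodMk (hasDerivAt_const τ θ)
  exact (hf.differentiable (by simp) (τ, θ)).hasFDerivAt.comp_hasDerivAt τ h1

lemma gSlice2 {f : ℝ × ℝ → ℝ} (hf : ContDiff ℝ (⊤ : ℕ∞) f) (τ θ : ℝ) :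
    HasDerivAt (fun t => f (τ, t)) (gD2 f (τ, θ)) θ := by
  have h1 : HasDerivAt (fun t : ℝ => (τ, t)) ((0:ℝ), (1:ℝ)) θ :=
    (hasDerivAt_const θ τ).prodMk (hasDerivAt_id θ)
  exact (hf.differentiable (by simp) (τ, θ)).hasFDerivAt.comp_hasDerivAt θ h1

/-- Symmetry of mixed second partial derivatives. -/
lemma gMixed {f : ℝ × ℝ → ℝ} (hf : ContDiff ℝ (⊤ : ℕ∞) f) (p : ℝ × ℝ) :
    gD1 (gD2 f) p = gD2 (gD1 f) p := by
  have hdf : ContDiff ℝ (⊤ : ℕ∞) (fderiv ℝ f) := hf.fderiv_right (by simp)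
  have hda : DifferentiableAt ℝ (fderiv ℝ f) p := hdf.differentiable (by simp) p
  have h1 : ∀ u : ℝ × ℝ, fderiv ℝ (fun q => fderiv ℝ f q u) p
      = (fderiv ℝ (fderiv ℝ f) p).flip u := by
    intro u
    rw [fderiv_clm_apply (c := fderiv ℝ f) (u := fun _ => u) hda (differentiableAt_const u)]
    simp
  show fderiv ℝ (fun q => fderiv ℝ f q (0,1)) p (1,0) = fderiv ℝ (fun q => fderiv ℝ f q (1,0)) p (0,1)
  rw [h1, h1]
  simp only [ContinuousLinearMap.flip_apply]
  exact second_derivative_symmetric (fun y => (hf.differentiable (by simp) y).hasFDerivAt)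
    hda.hasFDerivAt _ _

/-- Periodicity in the second variable is inherited by the full derivative. -/
lemma gPeriodic {f : ℝ × ℝ → ℝ} (hf : ContDiff ℝ (⊤ : ℕ∞) f)
    (hper : ∀ p : ℝ × ℝ, f (p + (0, 2 * π)) = f p) (p : ℝ × ℝ) :
    fderiv ℝ f (p + (0, 2 * π)) = fderiv ℝ f p := by
  have h : HasFDerivAt (fun x => f (x + (0, 2 * π))) (fderiv ℝ f (p + (0, 2 * π))) p := by
    have := ((hf.differentiable (by simp) (p + (0, 2 * π))).hasFDerivAt).comp p
      ((hasFDerivAt_id p).add_const (0, 2 * π))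
    exact this
  have hfun : (fun x => f (x + (0, 2 * π))) = f := funext fun x => hper x
  rw [hfun] at h
  exact (h.fderiv).symm ▸ ((hf.differentiable (by simp) p).hasFDerivAt.unique h).symm

lemma gD1_periodic {f : ℝ × ℝ → ℝ} (hf : ContDiff ℝ (⊤ : ℕ∞) f)
    (hper : ∀ p : ℝ × ℝ, f (p + (0, 2 * π)) = f p) (τ θ : ℝ) :
    gD1 f (τ, θ + 2 * π) = gD1 f (τ, θ) := by
  have := gPeriodic hf hper (τ, θ)
  simp only [gD1]
  rw [show ((τ, θ + 2 * π) : ℝ × ℝ) = (τ, θ) + (0, 2 * π) by simp [Prod.ext_iff], this]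

lemma gD2_periodic {f : ℝ × ℝ → ℝ} (hf : ContDiff ℝ (⊤ : ℕ∞) f)
    (hper : ∀ p : ℝ × ℝ, f (p + (0, 2 * π)) = f p) (τ θ : ℝ) :
    gD2 f (τ, θ + 2 * π) = gD2 f (τ, θ) := by
  have := gPeriodic hf hper (τ, θ)
  simp only [gD2]
  rw [show ((τ, θ + 2 * π) : ℝ × ℝ) = (τ, θ) + (0, 2 * π) by simp [Prod.ext_iff], this]

lemma gVal_periodic {f : ℝ × ℝ → ℝ}
    (hper : ∀ p : ℝ × ℝ, f (p + (0, 2 * π)) = f p) (τ θ : ℝ) :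
    f (τ, θ + 2 * π) = f (τ, θ) := by
  have := hper (τ, θ)
  rwa [show ((τ, θ) + (0, 2 * π) : ℝ × ℝ) = (τ, θ + 2 * π) by simp [Prod.ext_iff]] at this

theorem gowdy_aux (f q : ℝ × ℝ → ℝ) (hf : ContDiff ℝ (⊤ : ℕ∞) f) (hq : ContDiff ℝ (⊤ : ℕ∞) q)
    (hfper : ∀ p : ℝ × ℝ, f (p + (0, 2 * π)) = f p)
    (hqper : ∀ p : ℝ × ℝ, q (p + (0, 2 * π)) = q p)
    (hPw : ∀ t θ : ℝ, gD1 (gD1 f) (t, θ) = Real.exp (-2 * t) * gD2 (gD2 f) (t, θ)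
      + Real.exp (2 * f (t, θ)) * ((gD1 q (t, θ)) ^ 2 - Real.exp (-2 * t) * (gD2 q (t, θ)) ^ 2))
    (hQw : ∀ t θ : ℝ, gD1 (gD1 q) (t, θ) = Real.exp (-2 * t) * gD2 (gD2 q) (t, θ)
      - 2 * (gD1 f (t, θ) * gD1 q (t, θ) - Real.exp (-2 * t) * gD2 f (t, θ) * gD2 q (t, θ)))
    (τ₀ : ℝ) :
    HasDerivAt (fun t => ∫ θ in (0:ℝ)..(2 * π),
        (1/2) * ((gD1 f (t, θ)) ^ 2 + Real.exp (-2 * t) * (gD2 f (t, θ)) ^ 2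
          + Real.exp (2 * f (t, θ)) * ((gD1 q (t, θ)) ^ 2 + Real.exp (-2 * t) * (gD2 q (t, θ)) ^ 2)))
      (-Real.exp (-2 * τ₀) * ∫ θ in (0:ℝ)..(2 * π),
        ((gD2 f (τ₀, θ)) ^ 2 + Real.exp (2 * f (τ₀, θ)) * (gD2 q (τ₀, θ)) ^ 2)) τ₀ := by
  have h1 := gD1_contDiff hf
  have h2 := gD2_contDiff hf
  have k1 := gD1_contDiff hq
  have k2 := gD2_contDiff hq
  have c0 : Continuous f := hf.continuous
  have d0 : Continuous q := hq.continuous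
  have c1 : Continuous (gD1 f) := h1.continuous
  have c2 : Continuous (gD2 f) := h2.continuous
  have d1 : Continuous (gD1 q) := k1.continuous
  have d2 : Continuous (gD2 q) := k2.continuous
  have c11 : Continuous (gD1 (gD1 f)) := (gD1_contDiff h1).continuous
  have c12 : Continuous (gD1 (gD2 f)) := (gD1_contDiff h2).continuous
  have c21 : Continuous (gD2 (gD1 f)) := (gD2_contDiff h1).continuous
  have c22 : Continuous (gD2 (gD2 f)) := (gD2_contDiff h2).continuous
  have d11 : Continuous (gD1 (gD1 q)) := (gD1_contDiff k1).continuous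
  have d12 : Continuous (gD1 (gD2 q)) := (gD1_contDiff k2).continuous
  have d21 : Continuous (gD2 (gD1 q)) := (gD2_contDiff k1).continuous
  have d22 : Continuous (gD2 (gD2 q)) := (gD2_contDiff k2).continuous
  set Fb : ℝ × ℝ → ℝ := fun p => (1/2) * ((gD1 f p) ^ 2 + Real.exp (-2 * p.1) * (gD2 f p) ^ 2
      + Real.exp (2 * f p) * ((gD1 q p) ^ 2 + Real.exp (-2 * p.1) * (gD2 q p) ^ 2)) with hFbdef
  set Gb : ℝ × ℝ → ℝ := fun p =>
    gD1 f p * gD1 (gD1 f) p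
    + Real.exp (-2 * p.1) * (gD2 f p * gD1 (gD2 f) p) - Real.exp (-2 * p.1) * (gD2 f p) ^ 2
    + gD1 f p * Real.exp (2 * f p) * ((gD1 q p) ^ 2 + Real.exp (-2 * p.1) * (gD2 q p) ^ 2)
    + Real.exp (2 * f p) * (gD1 q p * gD1 (gD1 q) p
        + Real.exp (-2 * p.1) * (gD2 q p * gD1 (gD2 q) p) - Real.exp (-2 * p.1) * (gD2 q p) ^ 2)
    with hGbdef
  have hFcont : Continuous Fb := by rw [hFbdef]; fun_prop
  have hGcont : Continuous Gb := by rw [hGbdef]; fun_prop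
  -- derivative in t of the energy density
  have hFderiv : ∀ t θ : ℝ, HasDerivAt (fun s => Fb (s, θ)) (Gb (t, θ)) t := by
    intro t θ
    have ha := gSlice1 h1 t θ
    have hb := gSlice1 h2 t θ
    have hc := gSlice1 k1 t θ
    have hd := gSlice1 k2 t θ
    have hp := gSlice1 hf t θ
    have he : HasDerivAt (fun s : ℝ => Real.exp (-2 * s)) (Real.exp (-2 * t) * (-2)) t := by
      simpa using ((hasDerivAt_id t).const_mul (-2:ℝ)).exp
    have hX : HasDerivAt (fun s => Real.exp (2 * f (s, θ)))
        (Real.exp (2 * f (t, θ)) * (2 * gD1 f (t, θ))) t := (hp.const_mul 2).exp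
    have H := (((ha.pow 2).add (he.mul (hb.pow 2))).add
      (hX.mul ((hc.pow 2).add (he.mul (hd.pow 2))))).const_mul (1/2 : ℝ)
    refine H.congr_deriv ?_
    rw [hGbdef]
    simp only [Pi.pow_apply, Pi.add_apply, Pi.mul_apply]
    ring
  have h2pi : (0:ℝ) ≤ 2 * π := by positivity
  -- uniform bound for Gb near τ₀
  obtain ⟨C, hC⟩ := ((isCompact_Icc (a := τ₀ - 1) (b := τ₀ + 1)).prod
    (isCompact_uIcc (a := (0:ℝ)) (b := 2 * π))).exists_bound_of_continuousOn hGcont.continuousOn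
  have hsub : ∀ x ∈ Metric.ball τ₀ 1, ∀ θ ∈ Set.uIoc (0:ℝ) (2 * π),
      ((x, θ) : ℝ × ℝ) ∈ Set.Icc (τ₀ - 1) (τ₀ + 1) ×ˢ Set.uIcc (0:ℝ) (2 * π) := by
    intro x hx θ hθ
    have hx' : |x - τ₀| < 1 := by simpa [Real.dist_eq] using Metric.mem_ball.mp hx
    have := abs_lt.mp hx'
    exact ⟨⟨by linarith [this.1], by linarith [this.2]⟩, Set.uIoc_subset_uIcc hθ⟩
  have key := intervalIntegral.hasDerivAt_integral_of_dominated_loc_of_deriv_le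
    (𝕜 := ℝ) (μ := MeasureTheory.volume) (F := fun t θ => Fb (t, θ)) (F' := fun t θ => Gb (t, θ))
    (x₀ := τ₀) (a := 0) (b := 2 * π) (bound := fun _ => C) (Metric.ball_mem_nhds τ₀ one_pos)
    (Filter.Eventually.of_forall fun x =>
      ((hFcont.comp (Continuous.prodMk_right x)).aestronglyMeasurable))
    ((hFcont.comp (Continuous.prodMk_right τ₀)).intervalIntegrable 0 (2 * π))
    ((hGcont.comp (Continuous.prodMk_right τ₀)).aestronglyMeasurable)
    (Filter.Eventually.of_forall fun θ hθ x hx => hC _ (hsub x hx θ hθ))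
    intervalIntegrable_const
    (Filter.Eventually.of_forall fun θ _ x _ => hFderiv x θ)
  -- integration by parts on the circle
  set g : ℝ → ℝ := fun θ => Real.exp (-2 * τ₀) * (gD2 f (τ₀, θ) * gD1 f (τ₀, θ)
    + Real.exp (2 * f (τ₀, θ)) * (gD2 q (τ₀, θ) * gD1 q (τ₀, θ))) with hgdef
  set I : ℝ → ℝ := fun θ => (gD2 f (τ₀, θ)) ^ 2 + Real.exp (2 * f (τ₀, θ)) * (gD2 q (τ₀, θ)) ^ 2
    with hIdef
  have hIcont : Continuous I := by rw [hIdef]; fun_prop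
  have hGτcont : Continuous (fun θ => Gb (τ₀, θ)) := hGcont.comp (Continuous.prodMk_right τ₀)
  have hgd : ∀ θ : ℝ, HasDerivAt g (Gb (τ₀, θ) + Real.exp (-2 * τ₀) * I θ) θ := by
    intro θ
    have hb2 := gSlice2 h2 τ₀ θ
    have ha2 := gSlice2 h1 τ₀ θ
    have hd2 := gSlice2 k2 τ₀ θ
    have hc2 := gSlice2 k1 τ₀ θ
    have hp2 := gSlice2 hf τ₀ θ
    have hX : HasDerivAt (fun x => Real.exp (2 * f (τ₀, x)))
        (Real.exp (2 * f (τ₀, θ)) * (2 * gD2 f (τ₀, θ))) θ := (hp2.const_mul 2).exp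
    have H := ((hb2.mul ha2).add (hX.mul (hd2.mul hc2))).const_mul (Real.exp (-2 * τ₀))
    refine H.congr_deriv ?_
    simp only [hGbdef, hIdef]
    rw [hPw τ₀ θ, hQw τ₀ θ, gMixed hf (τ₀, θ), gMixed hq (τ₀, θ)]
    simp only [Pi.mul_apply]
    ring
  have hgper : g (2 * π) = g 0 := by
    rw [hgdef]
    simp only
    rw [show (2 * π : ℝ) = 0 + 2 * π from (zero_add _).symm,
      gD1_periodic hf hfper, gD2_periodic hf hfper, gD1_periodic hq hqper,
      gD2_periodic hq hqper, gVal_periodic hfper]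
  have hFTC : ∫ θ in (0:ℝ)..(2 * π), (Gb (τ₀, θ) + Real.exp (-2 * τ₀) * I θ) = g (2 * π) - g 0 :=
    intervalIntegral.integral_eq_sub_of_hasDerivAt (fun θ _ => hgd θ)
      ((hGτcont.add (continuous_const.mul hIcont)).intervalIntegrable 0 (2 * π))
  have hsplit : ∫ θ in (0:ℝ)..(2 * π), (Gb (τ₀, θ) + Real.exp (-2 * τ₀) * I θ)
      = (∫ θ in (0:ℝ)..(2 * π), Gb (τ₀, θ))
        + ∫ θ in (0:ℝ)..(2 * π), Real.exp (-2 * τ₀) * I θ :=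
    intervalIntegral.integral_add (hGτcont.intervalIntegrable 0 (2 * π))
      ((continuous_const.mul hIcont).intervalIntegrable 0 (2 * π))
  have hmul : ∫ θ in (0:ℝ)..(2 * π), Real.exp (-2 * τ₀) * I θ
      = Real.exp (-2 * τ₀) * ∫ θ in (0:ℝ)..(2 * π), I θ :=
    intervalIntegral.integral_const_mul _ _
  have hGval : ∫ θ in (0:ℝ)..(2 * π), Gb (τ₀, θ)
      = -Real.exp (-2 * τ₀) * ∫ θ in (0:ℝ)..(2 * π), I θ := by
    rw [hgper] at hFTC
    rw [hsplit, hmul] at hFTC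
    linarith
  have res := key.2
  rw [hGval] at res
  exact res


/-- Monotone decay of the Gowdy energy for smooth solutions of the T³ Gowdy system. -/
theorem gowdy_energy_decay
    (P Q : ℝ → ℝ → ℝ)
    (hPsmooth : ContDiff ℝ (⊤ : ℕ∞) (fun p : ℝ × ℝ => P p.1 p.2))
    (hQsmooth : ContDiff ℝ (⊤ : ℕ∞) (fun p : ℝ × ℝ => Q p.1 p.2))
    (hPper : ∀ τ θ : ℝ, P τ (θ + 2 * π) = P τ θ)
    (hQper : ∀ τ θ : ℝ, Q τ (θ + 2 * π) = Q τ θ)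
    (hPwave : ∀ τ θ : ℝ, deriv (fun s => deriv (fun s' => P s' θ) s) τ
      = Real.exp (-2 * τ) * deriv (deriv (P τ)) θ
        + Real.exp (2 * P τ θ) * ((deriv (fun s => Q s θ) τ) ^ 2
          - Real.exp (-2 * τ) * (deriv (Q τ) θ) ^ 2))
    (hQwave : ∀ τ θ : ℝ, deriv (fun s => deriv (fun s' => Q s' θ) s) τ
      = Real.exp (-2 * τ) * deriv (deriv (Q τ)) θ
        - 2 * (deriv (fun s => P s θ) τ * deriv (fun s => Q s θ) τ
          - Real.exp (-2 * τ) * deriv (P τ) θ * deriv (Q τ) θ))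
    (E : ℝ → ℝ)
    (hE : ∀ τ : ℝ, E τ = ∫ θ in (0:ℝ)..(2 * π),
      (1/2) * ((deriv (fun s => P s θ) τ) ^ 2
        + Real.exp (-2 * τ) * (deriv (P τ) θ) ^ 2
        + Real.exp (2 * P τ θ) * ((deriv (fun s => Q s θ) τ) ^ 2
          + Real.exp (-2 * τ) * (deriv (Q τ) θ) ^ 2))) :
    (∀ τ : ℝ, HasDerivAt E
      (-Real.exp (-2 * τ) * ∫ θ in (0:ℝ)..(2 * π),
        ((deriv (P τ) θ) ^ 2 + Real.exp (2 * P τ θ) * (deriv (Q τ) θ) ^ 2)) τ)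
    ∧ Antitone E := by
  set pf : ℝ × ℝ → ℝ := fun p => P p.1 p.2 with hpf
  set qf : ℝ × ℝ → ℝ := fun p => Q p.1 p.2 with hqf
  have hpfper : ∀ p : ℝ × ℝ, pf (p + (0, 2 * π)) = pf p := by
    intro p
    show P (p.1 + 0) (p.2 + 2 * π) = P p.1 p.2
    rw [add_zero]; exact hPper _ _
  have hqfper : ∀ p : ℝ × ℝ, qf (p + (0, 2 * π)) = qf p := by
    intro p
    show Q (p.1 + 0) (p.2 + 2 * π) = Q p.1 p.2
    rw [add_zero]; exact hQper _ _
  have hP1 : ∀ t θ : ℝ, deriv (fun s => P s θ) t = gD1 pf (t, θ) :=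
    fun t θ => (gSlice1 hPsmooth t θ).deriv
  have hP2 : ∀ t θ : ℝ, deriv (P t) θ = gD2 pf (t, θ) :=
    fun t θ => (gSlice2 hPsmooth t θ).deriv
  have hQ1 : ∀ t θ : ℝ, deriv (fun s => Q s θ) t = gD1 qf (t, θ) :=
    fun t θ => (gSlice1 hQsmooth t θ).deriv
  have hQ2 : ∀ t θ : ℝ, deriv (Q t) θ = gD2 qf (t, θ) :=
    fun t θ => (gSlice2 hQsmooth t θ).deriv
  have hP11 : ∀ t θ : ℝ, deriv (fun s => deriv (fun s' => P s' θ) s) t = gD1 (gD1 pf) (t, θ) := by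
    intro t θ
    have e1 : (fun s => deriv (fun s' => P s' θ) s) = fun s => gD1 pf (s, θ) :=
      funext fun s => hP1 s θ
    rw [e1]; exact (gSlice1 (gD1_contDiff hPsmooth) t θ).deriv
  have hP22 : ∀ t θ : ℝ, deriv (deriv (P t)) θ = gD2 (gD2 pf) (t, θ) := by
    intro t θ
    have e1 : deriv (P t) = fun x => gD2 pf (t, x) := funext fun x => hP2 t x
    rw [e1]; exact (gSlice2 (gD2_contDiff hPsmooth) t θ).deriv
  have hQ11 : ∀ t θ : ℝ, deriv (fun s => deriv (fun s' => Q s' θ) s) t = gD1 (gD1 qf) (t, θ) := by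
    intro t θ
    have e1 : (fun s => deriv (fun s' => Q s' θ) s) = fun s => gD1 qf (s, θ) :=
      funext fun s => hQ1 s θ
    rw [e1]; exact (gSlice1 (gD1_contDiff hQsmooth) t θ).deriv
  have hQ22 : ∀ t θ : ℝ, deriv (deriv (Q t)) θ = gD2 (gD2 qf) (t, θ) := by
    intro t θ
    have e1 : deriv (Q t) = fun x => gD2 qf (t, x) := funext fun x => hQ2 t x
    rw [e1]; exact (gSlice2 (gD2_contDiff hQsmooth) t θ).deriv
  have hPval : ∀ t θ : ℝ, P t θ = pf (t, θ) := fun _ _ => rfl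
  have hPw : ∀ t θ : ℝ, gD1 (gD1 pf) (t, θ) = Real.exp (-2 * t) * gD2 (gD2 pf) (t, θ)
      + Real.exp (2 * pf (t, θ)) * ((gD1 qf (t, θ)) ^ 2
        - Real.exp (-2 * t) * (gD2 qf (t, θ)) ^ 2) := by
    intro t θ
    have h := hPwave t θ
    rw [hP11, hP22, hQ1, hQ2, hPval] at h
    exact h
  have hQw : ∀ t θ : ℝ, gD1 (gD1 qf) (t, θ) = Real.exp (-2 * t) * gD2 (gD2 qf) (t, θ)
      - 2 * (gD1 pf (t, θ) * gD1 qf (t, θ)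
        - Real.exp (-2 * t) * gD2 pf (t, θ) * gD2 qf (t, θ)) := by
    intro t θ
    have h := hQwave t θ
    rw [hQ11, hQ22, hP1, hQ1, hP2, hQ2] at h
    exact h
  have hEeq : E = fun t => ∫ θ in (0:ℝ)..(2 * π),
      (1/2) * ((gD1 pf (t, θ)) ^ 2 + Real.exp (-2 * t) * (gD2 pf (t, θ)) ^ 2
        + Real.exp (2 * pf (t, θ)) * ((gD1 qf (t, θ)) ^ 2
          + Real.exp (-2 * t) * (gD2 qf (t, θ)) ^ 2)) := by
    funext t
    rw [hE t]
    simp only [hP1, hP2, hQ1, hQ2, hPval]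
    simp only [← hPval, hP1]
  have hmain : ∀ τ : ℝ, HasDerivAt E (-Real.exp (-2 * τ) * ∫ θ in (0:ℝ)..(2 * π),
      ((gD2 pf (τ, θ)) ^ 2 + Real.exp (2 * pf (τ, θ)) * (gD2 qf (τ, θ)) ^ 2)) τ := by
    intro τ
    rw [hEeq]
    exact gowdy_aux pf qf hPsmooth hQsmooth hpfper hqfper hPw hQw τ
  constructor
  · intro τ
    have h := hmain τ
    simp only [hP2, hQ2, hPval]
    exact h
  · apply antitone_of_deriv_nonpos
    · exact fun x => (hmain x).differentiableAt
    · intro x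
      rw [(hmain x).deriv]
      have hI : 0 ≤ ∫ θ in (0:ℝ)..(2 * π),
          ((gD2 pf (x, θ)) ^ 2 + Real.exp (2 * pf (x, θ)) * (gD2 qf (x, θ)) ^ 2) :=
        intervalIntegral.integral_nonneg (by positivity) (fun θ _ => by positivity)
      have h2 := mul_nonneg (Real.exp_pos (-2 * x)).le hI
      rw [neg_mul]
      exact neg_nonpos.mpr h2
end

section
/- Let (P, Q) be a smooth solution of the T³ Gowdy system. Then the quantity A(τ) = ∫₀^{2π} e^{2P(τ,θ)} ∂τQ(τ,θ) dθ is constant in τ. -/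
open Real

set_option maxHeartbeats 1000000

noncomputable def d1 (f : ℝ × ℝ → ℝ) : ℝ × ℝ → ℝ := fun p => fderiv ℝ f p (1, 0)
noncomputable def d2 (f : ℝ × ℝ → ℝ) : ℝ × ℝ → ℝ := fun p => fderiv ℝ f p (0, 1)

lemma hasDerivAt_slice1_s15 {f : ℝ × ℝ → ℝ} (hf : ContDiff ℝ (⊤ : ℕ∞) f) (τ θ : ℝ) :
    HasDerivAt (fun s => f (s, θ)) (d1 f (τ, θ)) τ := by
  have h := (hf.differentiable (by simp) (τ, θ)).hasFDerivAt
  have h2 : HasDerivAt (fun s : ℝ => (s, θ)) (((1:ℝ), (0:ℝ))) τ :=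
    (hasDerivAt_id τ).prodMk (hasDerivAt_const τ θ)
  exact h.comp_hasDerivAt τ h2

lemma hasDerivAt_slice2_s15 {f : ℝ × ℝ → ℝ} (hf : ContDiff ℝ (⊤ : ℕ∞) f) (τ θ : ℝ) :
    HasDerivAt (fun θ' => f (τ, θ')) (d2 f (τ, θ)) θ := by
  have h := (hf.differentiable (by simp) (τ, θ)).hasFDerivAt
  have h2 : HasDerivAt (fun θ' : ℝ => (τ, θ')) (((0:ℝ), (1:ℝ))) θ :=
    (hasDerivAt_const θ τ).prodMk (hasDerivAt_id θ)
  exact h.comp_hasDerivAt θ h2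

lemma d1_contDiff {f : ℝ × ℝ → ℝ} (hf : ContDiff ℝ (⊤ : ℕ∞) f) : ContDiff ℝ (⊤ : ℕ∞) (d1 f) :=
  (ContinuousLinearMap.apply ℝ ℝ (((1:ℝ), (0:ℝ)))).contDiff.comp (hf.fderiv_right (by simp))

lemma d2_contDiff {f : ℝ × ℝ → ℝ} (hf : ContDiff ℝ (⊤ : ℕ∞) f) : ContDiff ℝ (⊤ : ℕ∞) (d2 f) :=
  (ContinuousLinearMap.apply ℝ ℝ (((0:ℝ), (1:ℝ)))).contDiff.comp (hf.fderiv_right (by simp))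

/-- For smooth solutions of the T³ Gowdy system, the quantity
`A(τ) = ∫₀^{2π} e^{2P} ∂τQ dθ` is constant in `τ`. -/
theorem gowdy_A_conserved
    (P Q : ℝ → ℝ → ℝ)
    (hPsmooth : ContDiff ℝ (⊤ : ℕ∞) (fun p : ℝ × ℝ => P p.1 p.2))
    (hQsmooth : ContDiff ℝ (⊤ : ℕ∞) (fun p : ℝ × ℝ => Q p.1 p.2))
    (hPper : ∀ τ θ : ℝ, P τ (θ + 2 * π) = P τ θ)
    (hQper : ∀ τ θ : ℝ, Q τ (θ + 2 * π) = Q τ θ)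
    (hPwave : ∀ τ θ : ℝ, deriv (fun s => deriv (fun s' => P s' θ) s) τ
      = Real.exp (-2 * τ) * deriv (deriv (P τ)) θ
        + Real.exp (2 * P τ θ) * ((deriv (fun s => Q s θ) τ) ^ 2
          - Real.exp (-2 * τ) * (deriv (Q τ) θ) ^ 2))
    (hQwave : ∀ τ θ : ℝ, deriv (fun s => deriv (fun s' => Q s' θ) s) τ
      = Real.exp (-2 * τ) * deriv (deriv (Q τ)) θ
        - 2 * (deriv (fun s => P s θ) τ * deriv (fun s => Q s θ) τ
          - Real.exp (-2 * τ) * deriv (P τ) θ * deriv (Q τ) θ)) :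
    ∀ τ₁ τ₂ : ℝ,
      (∫ θ in (0:ℝ)..(2 * π), Real.exp (2 * P τ₁ θ) * deriv (fun s => Q s θ) τ₁)
        = ∫ θ in (0:ℝ)..(2 * π), Real.exp (2 * P τ₂ θ) * deriv (fun s => Q s θ) τ₂ := by
  intro τ₁ τ₂
  set pt := d1 (fun p : ℝ × ℝ => P p.1 p.2) with hptdef
  set qt := d1 (fun p : ℝ × ℝ => Q p.1 p.2) with hqtdef
  set pθ := d2 (fun p : ℝ × ℝ => P p.1 p.2) with hpθdef
  set qθ := d2 (fun p : ℝ × ℝ => Q p.1 p.2) with hqθdef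
  set qtt := d1 qt with hqttdef
  set qθθ := d2 qθ with hqθθdef
  -- pointwise identifications
  have hqt : ∀ τ θ : ℝ, deriv (fun s => Q s θ) τ = qt (τ, θ) := fun τ θ =>
    (hasDerivAt_slice1_s15 hQsmooth τ θ).deriv
  have hpt : ∀ τ θ : ℝ, deriv (fun s => P s θ) τ = pt (τ, θ) := fun τ θ =>
    (hasDerivAt_slice1_s15 hPsmooth τ θ).deriv
  have hqθ : ∀ τ θ : ℝ, deriv (Q τ) θ = qθ (τ, θ) := fun τ θ =>
    (hasDerivAt_slice2_s15 hQsmooth τ θ).deriv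
  have hpθ : ∀ τ θ : ℝ, deriv (P τ) θ = pθ (τ, θ) := fun τ θ =>
    (hasDerivAt_slice2_s15 hPsmooth τ θ).deriv
  have hqθθ : ∀ τ θ : ℝ, deriv (deriv (Q τ)) θ = qθθ (τ, θ) := by
    intro τ θ
    have h : deriv (Q τ) = fun θ' => qθ (τ, θ') := funext fun θ' => hqθ τ θ'
    rw [h]
    exact (hasDerivAt_slice2_s15 (d2_contDiff hQsmooth) τ θ).deriv
  have hqtt : ∀ τ θ : ℝ, deriv (fun s => deriv (fun s' => Q s' θ) s) τ = qtt (τ, θ) := by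
    intro τ θ
    have h : (fun s => deriv (fun s' => Q s' θ) s) = fun s => qt (s, θ) :=
      funext fun s => hqt s θ
    rw [h]
    exact (hasDerivAt_slice1_s15 (d1_contDiff hQsmooth) τ θ).deriv
  -- the τ-derivative of the integrand
  set F' : ℝ → ℝ → ℝ := fun τ θ =>
    Real.exp (2 * P τ θ) * (2 * pt (τ, θ)) * qt (τ, θ)
      + Real.exp (2 * P τ θ) * qtt (τ, θ) with hF'def
  have hdiff : ∀ (θ τ : ℝ),
      HasDerivAt (fun s => Real.exp (2 * P s θ) * qt (s, θ)) (F' τ θ) τ := by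
    intro θ τ
    have h1 : HasDerivAt (fun s => P s θ) (pt (τ, θ)) τ := hasDerivAt_slice1_s15 hPsmooth τ θ
    have h2 : HasDerivAt (fun s => 2 * P s θ) (2 * pt (τ, θ)) τ := h1.const_mul 2
    have h3 : HasDerivAt (fun s => Real.exp (2 * P s θ))
        (Real.exp (2 * P τ θ) * (2 * pt (τ, θ))) τ := h2.exp
    have h4 : HasDerivAt (fun s => qt (s, θ)) (qtt (τ, θ)) τ :=
      hasDerivAt_slice1_s15 (d1_contDiff hQsmooth) τ θ
    exact h3.mul h4
  -- continuity facts
  have cpt : Continuous pt := (d1_contDiff hPsmooth).continuous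
  have cqt : Continuous qt := (d1_contDiff hQsmooth).continuous
  have cpθ : Continuous pθ := (d2_contDiff hPsmooth).continuous
  have cqθ : Continuous qθ := (d2_contDiff hQsmooth).continuous
  have cqtt : Continuous qtt := (d1_contDiff (d1_contDiff hQsmooth)).continuous
  have cqθθ : Continuous qθθ := (d2_contDiff (d2_contDiff hQsmooth)).continuous
  have cP : Continuous (fun p : ℝ × ℝ => P p.1 p.2) := hPsmooth.continuous
  have cexpP : Continuous (fun p : ℝ × ℝ => Real.exp (2 * P p.1 p.2)) :=
    continuous_exp.comp (continuous_const.mul cP)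
  have cF' : Continuous (fun p : ℝ × ℝ => F' p.1 p.2) := by
    simp only [hF'def]
    exact ((cexpP.mul (continuous_const.mul cpt)).mul cqt).add (cexpP.mul cqtt)
  -- derivative of A at each τ₀
  set A : ℝ → ℝ := fun τ => ∫ θ in (0:ℝ)..(2 * π), Real.exp (2 * P τ θ) * qt (τ, θ)
    with hAdef
  have hA : ∀ τ₀ : ℝ, HasDerivAt A (∫ θ in (0:ℝ)..(2 * π), F' τ₀ θ) τ₀ := by
    intro τ₀
    have hK : IsCompact ((Set.Icc (τ₀ - 1) (τ₀ + 1)) ×ˢ (Set.Icc (0:ℝ) (2 * π))) :=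
      isCompact_Icc.prod isCompact_Icc
    obtain ⟨C, hC⟩ := hK.exists_bound_of_continuousOn cF'.continuousOn
    have hsub : Set.uIoc (0:ℝ) (2 * π) ⊆ Set.Icc (0:ℝ) (2 * π) := by
      rw [Set.uIoc_of_le (by positivity : (0:ℝ) ≤ 2 * π)]
      exact Set.Ioc_subset_Icc_self
    have hcont : ∀ x : ℝ, Continuous (fun t => Real.exp (2 * P x t) * qt (x, t)) := by
      intro x
      exact (cexpP.comp (Continuous.prodMk_right x)).mul
        (cqt.comp (Continuous.prodMk_right x))
    have hcontF' : Continuous (fun t => F' τ₀ t) := by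
      have h := cF'.comp (Continuous.prodMk_right (Y := ℝ) τ₀)
      exact h
    have hmeas : ∀ᶠ x in nhds τ₀, MeasureTheory.AEStronglyMeasurable
        (fun t => Real.exp (2 * P x t) * qt (x, t))
        (MeasureTheory.volume.restrict (Set.uIoc (0:ℝ) (2 * π))) :=
      Filter.Eventually.of_forall fun x => (hcont x).aestronglyMeasurable
    have hFint : IntervalIntegrable (fun t => Real.exp (2 * P τ₀ t) * qt (τ₀, t))
        MeasureTheory.volume 0 (2 * π) := (hcont τ₀).intervalIntegrable _ _
    have hF'meas : MeasureTheory.AEStronglyMeasurable (F' τ₀)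
        (MeasureTheory.volume.restrict (Set.uIoc (0:ℝ) (2 * π))) :=
      hcontF'.aestronglyMeasurable
    have hbound : ∀ᵐ t ∂(MeasureTheory.volume : MeasureTheory.Measure ℝ),
        t ∈ Set.uIoc (0:ℝ) (2 * π) → ∀ x ∈ Metric.ball τ₀ 1, ‖F' x t‖ ≤ C := by
      refine Filter.Eventually.of_forall fun t ht x hx => ?_
      have hxm : x ∈ Set.Icc (τ₀ - 1) (τ₀ + 1) := by
        rw [Metric.mem_ball, Real.dist_eq] at hx
        constructor <;> [linarith [(abs_lt.mp hx).1]; linarith [(abs_lt.mp hx).2]]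
      exact hC (x, t) (Set.mem_prod.mpr ⟨hxm, hsub ht⟩)
    have hbddint : IntervalIntegrable (fun _ : ℝ => C) MeasureTheory.volume 0 (2 * π) :=
      intervalIntegrable_const
    have hdif : ∀ᵐ t ∂(MeasureTheory.volume : MeasureTheory.Measure ℝ),
        t ∈ Set.uIoc (0:ℝ) (2 * π) → ∀ x ∈ Metric.ball τ₀ 1,
          HasDerivAt (fun x => Real.exp (2 * P x t) * qt (x, t)) (F' x t) x :=
      Filter.Eventually.of_forall fun t _ x _ => hdiff t x
    exact (intervalIntegral.hasDerivAt_integral_of_dominated_loc_of_deriv_le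
      (F := fun x t => Real.exp (2 * P x t) * qt (x, t)) (F' := F')
      (bound := fun _ => C) (μ := MeasureTheory.volume) (x₀ := τ₀)
      (a := (0:ℝ)) (b := 2 * π) (Metric.ball_mem_nhds τ₀ one_pos)
      hmeas hFint hF'meas hbound hbddint hdif).2
  -- the derivative integral vanishes
  have hzero : ∀ τ₀ : ℝ, (∫ θ in (0:ℝ)..(2 * π), F' τ₀ θ) = 0 := by
    intro τ₀
    set g : ℝ → ℝ := fun θ => Real.exp (2 * P τ₀ θ) * qθ (τ₀, θ) with hgdef
    have hg : ∀ θ : ℝ, HasDerivAt g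
        (Real.exp (2 * P τ₀ θ) * (2 * pθ (τ₀, θ)) * qθ (τ₀, θ)
          + Real.exp (2 * P τ₀ θ) * qθθ (τ₀, θ)) θ := by
      intro θ
      have h1 : HasDerivAt (fun θ' => P τ₀ θ') (pθ (τ₀, θ)) θ := hasDerivAt_slice2_s15 hPsmooth τ₀ θ
      have h2 : HasDerivAt (fun θ' => 2 * P τ₀ θ') (2 * pθ (τ₀, θ)) θ := h1.const_mul 2
      have h3 : HasDerivAt (fun θ' => Real.exp (2 * P τ₀ θ'))
          (Real.exp (2 * P τ₀ θ) * (2 * pθ (τ₀, θ))) θ := h2.exp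
      have h4 : HasDerivAt (fun θ' => qθ (τ₀, θ')) (qθθ (τ₀, θ)) θ :=
        hasDerivAt_slice2_s15 (d2_contDiff hQsmooth) τ₀ θ
      exact h3.mul h4
    have hkey : ∀ θ : ℝ, F' τ₀ θ = Real.exp (-2 * τ₀) * deriv g θ := by
      intro θ
      rw [(hg θ).deriv]
      have hq := hQwave τ₀ θ
      rw [hqtt τ₀ θ, hqθθ τ₀ θ, hpt τ₀ θ, hqt τ₀ θ, hpθ τ₀ θ, hqθ τ₀ θ] at hq
      simp only [hF'def]
      rw [hq]
      ring
    have hderivg : deriv g = fun θ =>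
        Real.exp (2 * P τ₀ θ) * (2 * pθ (τ₀, θ)) * qθ (τ₀, θ)
          + Real.exp (2 * P τ₀ θ) * qθθ (τ₀, θ) := funext fun θ => (hg θ).deriv
    have hcg : Continuous (deriv g) := by
      rw [hderivg]
      exact ((cexpP.comp (Continuous.prodMk_right τ₀)).mul
        ((continuous_const.mul (cpθ.comp (Continuous.prodMk_right τ₀))))).mul
          (cqθ.comp (Continuous.prodMk_right τ₀)) |>.add
            ((cexpP.comp (Continuous.prodMk_right τ₀)).mul
              (cqθθ.comp (Continuous.prodMk_right τ₀)))
    have hint : (∫ θ in (0:ℝ)..(2 * π), deriv g θ) = g (2 * π) - g 0 :=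
      intervalIntegral.integral_deriv_eq_sub (fun x _ => (hg x).differentiableAt)
        (hcg.intervalIntegrable _ _)
    have hper : g (2 * π) = g 0 := by
      have hP0 : P τ₀ (2 * π) = P τ₀ 0 := by
        have := hPper τ₀ 0
        rwa [zero_add] at this
      have hQd : deriv (Q τ₀) (2 * π) = deriv (Q τ₀) 0 := by
        have hshift : (fun x => Q τ₀ (x + 2 * π)) = Q τ₀ := funext fun x => hQper τ₀ x
        have h1 : deriv (fun x => Q τ₀ (x + 2 * π)) 0 = deriv (Q τ₀) (0 + 2 * π) :=
          deriv_comp_add_const _ _ _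
        rw [hshift, zero_add] at h1
        exact h1.symm
      have hqθper : qθ (τ₀, 2 * π) = qθ (τ₀, 0) := by
        rw [← hqθ τ₀ (2 * π), ← hqθ τ₀ 0, hQd]
      simp only [hgdef, hP0, hqθper]
    calc (∫ θ in (0:ℝ)..(2 * π), F' τ₀ θ)
        = ∫ θ in (0:ℝ)..(2 * π), Real.exp (-2 * τ₀) * deriv g θ := by
          simp only [hkey]
      _ = Real.exp (-2 * τ₀) * ∫ θ in (0:ℝ)..(2 * π), deriv g θ :=
          intervalIntegral.integral_const_mul _ _
      _ = 0 := by rw [hint, hper]; ring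
  -- conclude
  have hA0 : ∀ τ₀ : ℝ, HasDerivAt A 0 τ₀ := by
    intro τ₀
    have := hA τ₀
    rwa [hzero τ₀] at this
  have hconst : A τ₁ = A τ₂ :=
    is_const_of_deriv_eq_zero (fun x => (hA0 x).differentiableAt)
      (fun x => (hA0 x).deriv) τ₁ τ₂
  have hint1 : ∀ τ : ℝ, (∫ θ in (0:ℝ)..(2 * π), Real.exp (2 * P τ θ)
      * deriv (fun s => Q s θ) τ) = A τ := by
    intro τ
    simp only [hAdef]
    congr 1
    funext θ
    rw [hqt τ θ]
  rw [hint1 τ₁, hint1 τ₂, hconst]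
end

section
/- Let T > 0, ε > 0, m ≥ 0, C ≥ 0, and let f : (0,T] → ℝ be continuous with |f(t)| ≤ C t^ε for all t ∈ (0,T]. Then there exists exactly one differentiable function y : (0,T] → ℝ satisfying t y'(t) + m y(t) = f(t) for all t ∈ (0,T] and y(t) → 0 as t → 0⁺; moreover this solution satisfies |y(t)| ≤ C t^ε / (m + ε) for all t ∈ (0,T]. -/
/-!
Multiplying `t y' + m y = f` by the integrating factor `t^(m-1)` turns it into
`(t^m y)' = t^(m-1) f`. Since `|t^(m-1) f(t)| ≤ C t^(m+ε-1)` is integrable at `0`, integrating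
from `0` gives the solution `y(t) = t^(-m) ∫₀ᵗ s^(m-1) f(s) ds`, bounded by
`t^(-m) · C t^(m+ε) / (m+ε)`. Any other solution vanishing at `0⁺` differs from `y` by some `w`
with `t^m w` constant; as `t^m` stays bounded near `0` for `m ≥ 0`, that constant is `0`.
-/

open Filter Set MeasureTheory Topology intervalIntegral

section RpowBound

variable {g : ℝ → ℝ} {C r t : ℝ}

theorem intervalIntegrable_of_abs_le_rpow (hr : -1 < r) (hg : ContinuousOn g (Ioi 0))
    (hbd : ∀ s ∈ Ioi (0:ℝ), |g s| ≤ C * s ^ r) (ht : 0 ≤ t) :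
    IntervalIntegrable g volume 0 t := by
  refine ((intervalIntegrable_rpow' hr).const_mul C).mono_fun' ?_ ?_
  · rw [uIoc_of_le ht]
    exact (hg.mono Ioc_subset_Ioi_self).aestronglyMeasurable measurableSet_Ioc
  · rw [uIoc_of_le ht]
    exact (ae_restrict_iff' measurableSet_Ioc).2 (ae_of_all _ fun s hs => hbd s hs.1)

theorem abs_integral_le_of_abs_le_rpow (hr : -1 < r)
    (hbd : ∀ s ∈ Ioi (0:ℝ), |g s| ≤ C * s ^ r) (ht : 0 ≤ t) :
    |∫ s in (0:ℝ)..t, g s| ≤ C * t ^ (r + 1) / (r + 1) := by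
  have hint : ∫ s in (0:ℝ)..t, C * s ^ r = C * t ^ (r + 1) / (r + 1) := by
    rw [intervalIntegral.integral_const_mul, integral_rpow (Or.inl hr),
      Real.zero_rpow (by linarith), sub_zero, mul_div_assoc]
  rw [← hint, ← Real.norm_eq_abs]
  exact norm_integral_le_of_norm_le ht (ae_of_all _ fun s hs => hbd s hs.1)
    ((intervalIntegrable_rpow' hr).const_mul C)

end RpowBound

noncomputable def fuchsianIntegral (m : ℝ) (f : ℝ → ℝ) (t : ℝ) : ℝ :=
  t ^ (-m) * ∫ s in (0:ℝ)..t, s ^ (m - 1) * f s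

section FuchsianIntegral

variable {m ε C t : ℝ} {f : ℝ → ℝ}

theorem abs_rpow_sub_one_mul_le (hbd : ∀ s ∈ Ioi (0:ℝ), |f s| ≤ C * s ^ ε) :
    ∀ s ∈ Ioi (0:ℝ), |s ^ (m - 1) * f s| ≤ C * s ^ (m - 1 + ε) := by
  intro s hs
  have hpow := Real.rpow_nonneg (le_of_lt hs) (m - 1)
  rw [abs_mul, abs_of_nonneg hpow, Real.rpow_add hs, mul_left_comm]
  exact mul_le_mul_of_nonneg_left (hbd s hs) hpow

theorem abs_fuchsianIntegral_le (hbd : ∀ s ∈ Ioi (0:ℝ), |f s| ≤ C * s ^ ε) (hmε : 0 < m + ε)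
    (ht : 0 < t) : |fuchsianIntegral m f t| ≤ C * t ^ ε / (m + ε) := by
  have hpow := Real.rpow_nonneg ht.le (-m)
  have hint :=
    abs_integral_le_of_abs_le_rpow (by linarith) (abs_rpow_sub_one_mul_le (m := m) hbd) ht.le
  rw [show m - 1 + ε + 1 = m + ε by ring] at hint
  calc |fuchsianIntegral m f t|
      ≤ t ^ (-m) * (C * t ^ (m + ε) / (m + ε)) := by
        rw [fuchsianIntegral, abs_mul, abs_of_nonneg hpow]
        exact mul_le_mul_of_nonneg_left hint hpow
    _ = C * t ^ ε / (m + ε) := by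
        rw [mul_div_assoc', mul_left_comm, ← Real.rpow_add ht, neg_add_cancel_left]

theorem tendsto_fuchsianIntegral_nhdsGT_zero (hbd : ∀ s ∈ Ioi (0:ℝ), |f s| ≤ C * s ^ ε)
    (hε : 0 < ε) (hmε : 0 < m + ε) : Tendsto (fuchsianIntegral m f) (𝓝[>] 0) (𝓝 0) := by
  have hlim : Tendsto (fun t : ℝ => C * t ^ ε / (m + ε)) (𝓝[>] 0) (𝓝 0) := by
    have := ((Real.continuous_rpow_const hε.le).const_mul C).div_const (m + ε) |>.tendsto 0
    rw [Real.zero_rpow hε.ne', mul_zero, zero_div] at this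
    exact this.mono_left nhdsWithin_le_nhds
  refine squeeze_zero_norm' ?_ hlim
  filter_upwards [self_mem_nhdsWithin] with t ht
  exact abs_fuchsianIntegral_le hbd hmε ht

theorem hasDerivAt_fuchsianIntegral (hf : ContinuousOn f (Ioi 0))
    (hbd : ∀ s ∈ Ioi (0:ℝ), |f s| ≤ C * s ^ ε) (hmε : 0 < m + ε) (ht : 0 < t) :
    HasDerivAt (fuchsianIntegral m f) ((f t - m * fuchsianIntegral m f t) / t) t := by
  have hg : ContinuousOn (fun s => s ^ (m - 1) * f s) (Ioi 0) :=
    (continuousOn_id.rpow_const fun _ hs => Or.inl (ne_of_gt hs)).mul hf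
  have hF : HasDerivAt (fun t => ∫ s in (0:ℝ)..t, s ^ (m - 1) * f s) (t ^ (m - 1) * f t) t :=
    integral_hasDerivAt_right
      (intervalIntegrable_of_abs_le_rpow (by linarith) hg (abs_rpow_sub_one_mul_le hbd) ht.le)
      (hg.stronglyMeasurableAtFilter isOpen_Ioi t ht) (hg.continuousAt (Ioi_mem_nhds ht))
  have hpow : HasDerivAt (fun t : ℝ => t ^ (-m)) (-m * t ^ (-m - 1)) t :=
    Real.hasDerivAt_rpow_const (Or.inl ht.ne')
  refine (hpow.mul hF).congr_deriv ?_
  rw [fuchsianIntegral, Real.rpow_sub_one ht.ne', Real.rpow_sub_one ht.ne', Real.rpow_neg ht.le]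
  field_simp
  ring

theorem mul_deriv_fuchsianIntegral_add (hf : ContinuousOn f (Ioi 0))
    (hbd : ∀ s ∈ Ioi (0:ℝ), |f s| ≤ C * s ^ ε) (hmε : 0 < m + ε) (ht : 0 < t) :
    t * deriv (fuchsianIntegral m f) t + m * fuchsianIntegral m f t = f t := by
  rw [(hasDerivAt_fuchsianIntegral hf hbd hmε ht).deriv, mul_div_cancel₀ _ ht.ne']
  ring

end FuchsianIntegral

theorem hasDerivAt_rpow_mul {w : ℝ → ℝ} {w' t : ℝ} (m : ℝ) (hw : HasDerivAt w w' t)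
    (ht : 0 < t) :
    HasDerivAt (fun s => s ^ m * w s) (t ^ (m - 1) * (t * w' + m * w t)) t := by
  refine ((Real.hasDerivAt_rpow_const (p := m) (Or.inl ht.ne')).mul hw).congr_deriv ?_
  rw [Real.rpow_sub_one ht.ne']
  field_simp
  ring

section Uniqueness

variable {m T : ℝ} {w : ℝ → ℝ}

theorem eqOn_zero_of_fuchsian_homogeneous {w' : ℝ → ℝ} (hm : 0 ≤ m)
    (hw : ∀ t ∈ Ioc 0 T, HasDerivAt w (w' t) t) (hode : ∀ t ∈ Ioc 0 T, t * w' t + m * w t = 0)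
    (hlim : Tendsto w (𝓝[>] 0) (𝓝 0)) : EqOn w 0 (Ioc 0 T) := by
  intro t ht
  set h : ℝ → ℝ := fun s => s ^ m * w s
  have hderiv : ∀ s ∈ Ioc 0 T, HasDerivAt h 0 s := fun s hs => by
    simpa [hode s hs] using hasDerivAt_rpow_mul m (hw s hs) hs.1
  have hconst : ∀ s ∈ Ioc 0 t, h s = h t := fun s hs => by
    have hsub : Icc s t ⊆ Ioc 0 T := fun u hu => ⟨hs.1.trans_le hu.1, hu.2.trans ht.2⟩
    refine (constant_of_has_deriv_right_zero (fun u hu => ?_) (fun u hu => ?_) t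
      ⟨hs.2, le_rfl⟩).symm
    · exact (hderiv u (hsub hu)).continuousAt.continuousWithinAt
    · exact (hderiv u (hsub (Ico_subset_Icc_self hu))).hasDerivWithinAt
  have hlim_h : Tendsto h (𝓝[>] 0) (𝓝 0) := by
    have := ((Real.continuous_rpow_const hm).tendsto 0).mono_left nhdsWithin_le_nhds |>.mul hlim
    rwa [mul_zero] at this
  have hlim_const : Tendsto h (𝓝[>] 0) (𝓝 (h t)) := by
    refine tendsto_const_nhds.congr' ?_
    filter_upwards [Ioo_mem_nhdsGT ht.1] with s hs
    exact (hconst s ⟨hs.1, hs.2.le⟩).symm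
  have hht : t ^ m * w t = 0 := tendsto_nhds_unique hlim_const hlim_h
  simpa [(Real.rpow_pos_of_pos ht.1 m).ne'] using hht

theorem eqOn_of_fuchsian {f y z : ℝ → ℝ} (hm : 0 ≤ m)
    (hy : ∀ t ∈ Ioc 0 T, DifferentiableAt ℝ y t ∧ t * deriv y t + m * y t = f t)
    (hz : ∀ t ∈ Ioc 0 T, DifferentiableAt ℝ z t ∧ t * deriv z t + m * z t = f t)
    (hylim : Tendsto y (𝓝[>] 0) (𝓝 0)) (hzlim : Tendsto z (𝓝[>] 0) (𝓝 0)) :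
    EqOn z y (Ioc 0 T) := by
  have hdiff := eqOn_zero_of_fuchsian_homogeneous (w := fun t => z t - y t) hm
    (fun t ht => (hz t ht).1.hasDerivAt.sub (hy t ht).1.hasDerivAt)
    (fun t ht => by linear_combination (hz t ht).2 - (hy t ht).2)
    (by simpa using hzlim.sub hylim)
  exact fun t ht => sub_eq_zero.1 (hdiff ht)

end Uniqueness

/-- Basic linear Fuchsian ODE lemma: for `m ≥ 0`, `ε > 0` and continuous `f` with
`|f t| ≤ C t^ε`, the singular equation `t y'(t) + m y(t) = f(t)` on `(0,T]` has exactly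
one solution with `y(t) → 0` as `t → 0⁺`, and it satisfies `|y t| ≤ C t^ε / (m + ε)`. -/
theorem linear_fuchsian_ode_lemma
    (T ε m C : ℝ) (hT : 0 < T) (hε : 0 < ε) (hm : 0 ≤ m) (hC : 0 ≤ C)
    (f : ℝ → ℝ) (hf : ContinuousOn f (Set.Ioc 0 T))
    (hbd : ∀ t ∈ Set.Ioc (0:ℝ) T, |f t| ≤ C * t ^ ε) :
    ∃ y : ℝ → ℝ,
      ((∀ t ∈ Set.Ioc (0:ℝ) T, DifferentiableAt ℝ y t ∧
          t * deriv y t + m * y t = f t) ∧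
        Tendsto y (nhdsWithin 0 (Set.Ioi 0)) (nhds 0)) ∧
      (∀ t ∈ Set.Ioc (0:ℝ) T, |y t| ≤ C * t ^ ε / (m + ε)) ∧
      ∀ z : ℝ → ℝ,
        ((∀ t ∈ Set.Ioc (0:ℝ) T, DifferentiableAt ℝ z t ∧
            t * deriv z t + m * z t = f t) ∧
          Tendsto z (nhdsWithin 0 (Set.Ioi 0)) (nhds 0)) →
        Set.EqOn z y (Set.Ioc 0 T) := by
  have hmε : 0 < m + ε := by linarith
  -- Extending `f` by `f T` beyond `T` makes the solution differentiable at the endpoint `T`.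
  set fT : ℝ → ℝ := fun s => f (min s T)
  have hmin : ∀ s ∈ Ioi (0:ℝ), min s T ∈ Ioc 0 T := fun s hs => ⟨lt_min hs hT, min_le_right _ _⟩
  have hfT : ContinuousOn fT (Ioi 0) :=
    hf.comp (continuous_id.min continuous_const).continuousOn hmin
  have hbdT : ∀ s ∈ Ioi (0:ℝ), |fT s| ≤ C * s ^ ε := fun s hs =>
    (hbd _ (hmin s hs)).trans <| mul_le_mul_of_nonneg_left
      (Real.rpow_le_rpow (hmin s hs).1.le (min_le_left _ _) hε.le) hC
  have hsol : ∀ t ∈ Ioc (0:ℝ) T, DifferentiableAt ℝ (fuchsianIntegral m fT) t ∧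
      t * deriv (fuchsianIntegral m fT) t + m * fuchsianIntegral m fT t = f t := fun t ht =>
    ⟨(hasDerivAt_fuchsianIntegral hfT hbdT hmε ht.1).differentiableAt,
      (mul_deriv_fuchsianIntegral_add hfT hbdT hmε ht.1).trans (congrArg f (min_eq_left ht.2))⟩
  have hlim := tendsto_fuchsianIntegral_nhdsGT_zero hbdT hε hmε
  exact ⟨_, ⟨hsol, hlim⟩, fun t ht => abs_fuchsianIntegral_le hbdT hmε ht.1,
    fun z ⟨hz, hzlim⟩ => eqOn_of_fuchsian hm hsol hz hlim hzlim⟩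
end
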